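/- arXiv:1611.01313 — 2 statements merged into one kernel-verified Lean document; each statement's English description precedes it below -/
import Mathlib

section
/- Let E be a free abelian group, I a subgroup of E, and A = E/I. Then the cokernel of the natural map I ⊗ E → ⊗̃²(E) (the composite of the inclusion-induced map I ⊗ E → E ⊗ E with the projection E ⊗ E → ⊗̃²(E)) is naturally isomorphic to the antisymmetric square ⊗̃²(A). -/
open TensorProduct

/-- the subgroup of `A ⊗ A` generated by the elements `a⊗b + b⊗a` -/
noncomputable def antisymRel (A : Type) [AddCommGroup A] :
    Submodule ℤ (A ⊗[ℤ] A) :=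
  Submodule.span ℤ {x | ∃ a b : A, x = a ⊗ₜ[ℤ] b + b ⊗ₜ[ℤ] a}

/-- the antisymmetric square `⊗̃²(A) = (A ⊗ A)/⟨a⊗b + b⊗a⟩` -/
noncomputable abbrev AntisymSq (A : Type) [AddCommGroup A] :=
  (A ⊗[ℤ] A) ⧸ antisymRel A

/-- the natural map `I ⊗ E → ⊗̃²(E)` -/
noncomputable def toAntisym (E : Type) [AddCommGroup E]
    (I : Submodule ℤ E) : (↥I ⊗[ℤ] E) →ₗ[ℤ] AntisymSq E :=
  (antisymRel E).mkQ ∘ₗ TensorProduct.map I.subtype LinearMap.id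

open LinearMap

/-!
Let `f : E ⊗ E → A ⊗ A` be the tensor square of the projection. By right exactness of `⊗`, `ker f`
is spanned by the images of `I ⊗ E` and `E ⊗ I`; since `e ⊗ i ≡ -(i ⊗ e)` modulo the antisymmetry
relations, it lies in `antisymRel E ⊔ (I ⊗ E)`. As `f` maps `antisymRel E` onto `antisymRel A`, the
surjection `E ⊗ E → ⊗̃²(A)` has kernel exactly `antisymRel E ⊔ (I ⊗ E)`, which is also the kernel of
`E ⊗ E → ⊗̃²(E) / (I ⊗ E)`.
-/

section AntisymRel

variable {E F : Type} [AddCommGroup E] [AddCommGroup F]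

lemma add_comm_mem_antisymRel (x : E ⊗[ℤ] E) :
    x + TensorProduct.comm ℤ E E x ∈ antisymRel E := by
  induction x using TensorProduct.induction_on with
  | zero => simp
  | tmul a b => exact Submodule.subset_span ⟨a, b, rfl⟩
  | add x y hx hy =>
    rw [map_add, add_add_add_comm]
    exact add_mem hx hy

lemma map_antisymRel_of_surjective {f : E →ₗ[ℤ] F} (hf : Function.Surjective f) :
    (antisymRel E).map (TensorProduct.map f f) = antisymRel F := by
  rw [antisymRel, antisymRel]
  -- `antisymRel` carries the ℤ-module structure `AddCommGroup.toIntModule`, not the one of `⊗`,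
  -- so rewriting with general lemmas about linear maps needs `erw`.
  erw [Submodule.map_span]
  congr 1
  ext x
  constructor
  · rintro ⟨_, ⟨a, b, rfl⟩, rfl⟩
    exact ⟨f a, f b, by simp⟩
  · rintro ⟨a, b, rfl⟩
    obtain ⟨a, rfl⟩ := hf a
    obtain ⟨b, rfl⟩ := hf b
    exact ⟨_, ⟨a, b, rfl⟩, by simp⟩

lemma range_lTensor_subtype_le_antisymRel_sup (I : Submodule ℤ E) :
    range (lTensor E I.subtype) ≤ antisymRel E ⊔ range (rTensor E I.subtype) := by
  rintro _ ⟨t, rfl⟩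
  set y := rTensor E I.subtype (TensorProduct.comm ℤ E I t)
  have hy : lTensor E I.subtype t = TensorProduct.comm ℤ E E y := by
    simp [y, rTensor_comm]
  rw [hy, ← add_sub_cancel_left y (TensorProduct.comm ℤ E E y)]
  exact sub_mem (Submodule.mem_sup_left (add_comm_mem_antisymRel y))
    (Submodule.mem_sup_right ⟨_, rfl⟩)

noncomputable def antisymSqMapMkQ (I : Submodule ℤ E) : E ⊗[ℤ] E →ₗ[ℤ] AntisymSq (E ⧸ I) :=
  (antisymRel (E ⧸ I)).mkQ ∘ₗ TensorProduct.map I.mkQ I.mkQ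

lemma antisymSqMapMkQ_surjective (I : Submodule ℤ E) :
    Function.Surjective (antisymSqMapMkQ I) :=
  (Submodule.mkQ_surjective _).comp (map_surjective I.mkQ_surjective I.mkQ_surjective)

lemma ker_antisymSqMapMkQ (I : Submodule ℤ E) :
    ker (antisymSqMapMkQ I) = antisymRel E ⊔ range (rTensor E I.subtype) := by
  have hker : ker (TensorProduct.map I.mkQ I.mkQ) =
      range (lTensor E I.subtype) ⊔ range (rTensor E I.subtype) :=
    TensorProduct.map_ker (exact_subtype_mkQ I) I.mkQ_surjective
      (exact_subtype_mkQ I) I.mkQ_surjective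
  rw [antisymSqMapMkQ]
  erw [ker_comp, Submodule.ker_mkQ,
    ← map_antisymRel_of_surjective I.mkQ_surjective, Submodule.comap_map_eq, hker]
  exact le_antisymm
    (sup_le le_sup_left (sup_le (range_lTensor_subtype_le_antisymRel_sup I) le_sup_right))
    (sup_le_sup_left le_sup_right _)

lemma range_toAntisym (I : Submodule ℤ E) :
    range (toAntisym E I) = (range (rTensor E I.subtype)).map (antisymRel E).mkQ := by
  rw [toAntisym]
  erw [range_comp]
  rfl

end AntisymRel

theorem cokernel_toAntisym_general (E : Type) [AddCommGroup E]
    (I : Submodule ℤ E) :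
    Nonempty ((AntisymSq E ⧸ LinearMap.range (toAntisym E I)) ≃ₗ[ℤ]
      AntisymSq (E ⧸ I)) := by
  rw [range_toAntisym]
  exact ⟨Submodule.quotientQuotientEquivQuotientSup _ _ ≪≫ₗ
    Submodule.quotEquivOfEq _ _ (ker_antisymSqMapMkQ I).symm ≪≫ₗ
    quotKerEquivOfSurjective _ (antisymSqMapMkQ_surjective I)⟩

/-- part of Lemma 2.6: for a free abelian group `E` and a subgroup
`I ≤ E` with `A = E/I`, the cokernel of `I ⊗ E → ⊗̃²(E)` is naturally isomorphic
to `⊗̃²(A)`. -/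
theorem cokernel_toAntisym (E : Type) [AddCommGroup E]
    [Module.Free ℤ E] (I : Submodule ℤ E) :
    Nonempty ((AntisymSq E ⧸ LinearMap.range (toAntisym E I)) ≃ₗ[ℤ]
      AntisymSq (E ⧸ I)) :=
  cokernel_toAntisym_general E I
end

section
/- Let F be a free group with normal subgroups R and S. Let r₁, …, r_k ∈ R and t₁, …, t_k ∈ R∩S be elements such that the product [r₁,t₁][r₂,t₂]⋯[r_k,t_k] = 1 in F. Then for any d, e ∈ S, the element w := ∏ᵢ [[rᵢ⁻¹, d], [tᵢ, e]] (product taken in order i = 1,…,k) satisfies w − 1 ∈ Δ(R)Δ(S)Δ(F) in ℤ[F]. -/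
/-!
Write `θ x = x - 1` and compute in `ℤ[F] ⧸ Δ(R)Δ(S)Δ(F)`. Because
`θ (x y) = θ x + θ y + θ x θ y`, the class of `θ x θ z` is additive in `x` on `R ∩ S`, and the
class of `θ c` is additive along products of commutators `c` of elements of `R ∩ S`, whose `θ`
lies in `Δ(R)Δ(S)ℤ[F]`. Expanding `θ [[r⁻¹,d],[t,e]]` leaves the class of
`(θ β - θ (r⁻¹ β r)) θ d` with `β = [e,t]`; additivity, together with `re = er[r,e]`, turns it
into `(θ γ - θ (e⁻¹ γ e)) θ d` with `γ = [r,t]`. Summed over `i` this is the class of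
`(θ (∏ γᵢ) - θ (e⁻¹ (∏ γᵢ) e)) θ d = 0`.
-/

/-- the augmentation ideal `Δ(N)` of a subgroup `N ≤ F`, inside `ℤ[F]` -/
noncomputable def aug {F : Type} [Group F] (N : Subgroup F) :
    Submodule ℤ (MonoidAlgebra ℤ F) :=
  Submodule.span ℤ {x | ∃ n ∈ N, x = (MonoidAlgebra.of ℤ F n) - 1}

/-- the ideal `𝐧 = Δ(N)ℤ[F]` of `ℤ[F]` -/
noncomputable def augI {F : Type} [Group F] (N : Subgroup F) :
    Submodule ℤ (MonoidAlgebra ℤ F) :=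
  aug N * ⊤

/-- the commutator `[x,y] = x⁻¹y⁻¹xy` (convention of the paper) -/
def pcomm {F : Type} [Group F] (x y : F) : F := x⁻¹ * y⁻¹ * x * y

open MonoidAlgebra

variable {F : Type} [Group F]

lemma pcomm_inv (x y : F) : (pcomm x y)⁻¹ = pcomm y x := by
  simp only [pcomm]; group

lemma pcomm_mem_left {N : Subgroup F} [hN : N.Normal] {x : F} (hx : x ∈ N) (y : F) :
    pcomm x y ∈ N := by
  rw [show pcomm x y = x⁻¹ * (y⁻¹ * x * y) by simp only [pcomm]; group]
  exact mul_mem (inv_mem hx) (hN.conj_mem' x hx y)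

lemma pcomm_mem_right {N : Subgroup F} [N.Normal] (x : F) {y : F} (hy : y ∈ N) :
    pcomm x y ∈ N := by
  rw [← pcomm_inv]; exact inv_mem (pcomm_mem_left hy x)

section AugElt

noncomputable def augElt (x : F) : MonoidAlgebra ℤ F := of ℤ F x - 1

lemma augElt_one : augElt (1 : F) = 0 := by simp only [augElt, map_one, sub_self]

lemma augElt_mem_aug {N : Subgroup F} {x : F} (hx : x ∈ N) : augElt x ∈ aug N :=
  Submodule.subset_span ⟨x, hx, rfl⟩

lemma augElt_mul (x y : F) : augElt (x * y) = augElt x + augElt y + augElt x * augElt y := by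
  simp only [augElt, map_mul]; noncomm_ring

lemma augElt_mul_of (x g : F) : augElt x * of ℤ F g = augElt (x * g) - augElt g := by
  simp only [augElt, map_mul]; noncomm_ring

lemma of_mul_augElt (g x : F) : of ℤ F g * augElt x = augElt (g * x) - augElt g := by
  simp only [augElt, map_mul]; noncomm_ring

lemma augElt_mul_augElt_eq_conj (x g : F) :
    augElt x * augElt g
      = augElt (g⁻¹ * x * g) - augElt x + augElt g * augElt (g⁻¹ * x * g) := by
  simp only [augElt, map_mul]
  have : of ℤ F x * of ℤ F g = of ℤ F g * (of ℤ F g⁻¹ * of ℤ F x * of ℤ F g) := by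
    simp only [← map_mul]; group
  linear_combination (norm := noncomm_ring) this

lemma augElt_pcomm (a b : F) :
    augElt (pcomm a b) =
      (augElt a⁻¹ * augElt b⁻¹ - augElt b⁻¹ * augElt a⁻¹) * of ℤ F (a * b) := by
  simp only [augElt, pcomm, mul_sub, sub_mul, one_mul, mul_one, ← map_mul]
  simp only [mul_assoc, inv_mul_cancel_left, inv_mul_cancel, map_one]
  abel

lemma mul_augElt_mem_aug_top (u : MonoidAlgebra ℤ F) (x : F) :
    u * augElt x ∈ aug (⊤ : Subgroup F) := by
  induction u using MonoidAlgebra.induction_on with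
  | of g => rw [of_mul_augElt]; exact sub_mem (augElt_mem_aug trivial) (augElt_mem_aug trivial)
  | add u v hu hv => rw [add_mul]; exact add_mem hu hv
  | smul n u hu => rw [smul_mul_assoc]; exact Submodule.smul_mem _ _ hu

end AugElt

section Quotient

open Submodule.Quotient (mk_add mk_sub mk_neg mk_zero mk_eq_zero)

variable (R S : Subgroup F)

local notation "𝔐" => aug R * aug S * aug (⊤ : Subgroup F)

noncomputable def augPair (x z : F) : MonoidAlgebra ℤ F ⧸ 𝔐 :=
  Submodule.Quotient.mk (augElt x * augElt z)

variable {R S}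

lemma augElt_mul_mul_mem {x y : F} (hx : x ∈ R) (hy : y ∈ S) (z : F) :
    augElt x * augElt y * augElt z ∈ 𝔐 :=
  Submodule.mul_mem_mul (Submodule.mul_mem_mul (augElt_mem_aug hx) (augElt_mem_aug hy))
    (augElt_mem_aug trivial)

lemma augElt_mul_mul_mul_of_mem {x y : F} (hx : x ∈ R) (hy : y ∈ S) (z g : F) :
    augElt x * augElt y * augElt z * of ℤ F g ∈ 𝔐 := by
  rw [mul_assoc (augElt x * augElt y), augElt_mul_of, mul_sub]
  exact sub_mem (augElt_mul_mul_mem hx hy _) (augElt_mul_mul_mem hx hy _)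

lemma mk_augElt_mul_augElt_mul_of {x y : F} (hx : x ∈ R) (hy : y ∈ S) (g : F) :
    (Submodule.Quotient.mk (augElt x * augElt y * of ℤ F g) : _ ⧸ 𝔐) = augPair R S x y := by
  rw [augPair, Submodule.Quotient.eq]
  convert augElt_mul_mul_mem hx hy g using 1
  simp only [augElt]; noncomm_ring

lemma augPair_mul_left {x y : F} (hx : x ∈ R) (hy : y ∈ S) (z : F) :
    augPair R S (x * y) z = augPair R S x z + augPair R S y z := by
  have h := augElt_mul_mul_mem hx hy z
  rw [← mk_eq_zero] at h
  rw [augPair, augElt_mul, add_mul, add_mul, mk_add, mk_add, h, add_zero]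
  rfl

lemma augPair_inv_right {x z : F} (hx : x ∈ R) (hz : z ∈ S) :
    augPair R S x z⁻¹ = -augPair R S x z := by
  have h : augElt x * augElt z⁻¹ = -(augElt x * augElt z * of ℤ F z⁻¹) := by
    rw [mul_assoc, augElt_mul_of, mul_inv_cancel, augElt_one, zero_sub, mul_neg, neg_neg]
  rw [augPair, h, mk_neg, mk_augElt_mul_augElt_mul_of hx hz]

lemma augPair_inv_left {x : F} (hx : x ∈ R ⊓ S) (z : F) :
    augPair R S x⁻¹ z = -augPair R S x z := by
  have h := augPair_mul_left (inv_mem hx.1) hx.2 z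
  rw [inv_mul_cancel, augPair, augElt_one, zero_mul, mk_zero] at h
  exact eq_neg_of_add_eq_zero_left h.symm

lemma augPair_inv_mul {x y : F} (hx : x ∈ R ⊓ S) (hy : y ∈ S) (z : F) :
    augPair R S (x⁻¹ * y) z = augPair R S y z - augPair R S x z := by
  rw [augPair_mul_left (inv_mem hx.1) hy, augPair_inv_left hx]; abel

lemma augPair_conj {q x : F} (hq : q ∈ R ⊓ S) (hx : x ∈ R ⊓ S) (z : F) :
    augPair R S (q * x * q⁻¹) z = augPair R S x z := by
  rw [augPair_mul_left (mul_mem hq.1 hx.1) (inv_mem hq.2), augPair_mul_left hq.1 hx.2,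
    augPair_inv_left hq]
  abel

lemma mk_augElt_pcomm {a b : F} (ha : a ∈ R ⊓ S) (hb : b ∈ R ⊓ S) :
    (Submodule.Quotient.mk (augElt (pcomm a b)) : _ ⧸ 𝔐)
      = augPair R S a⁻¹ b⁻¹ - augPair R S b⁻¹ a⁻¹ := by
  rw [augElt_pcomm, sub_mul, mk_sub,
    mk_augElt_mul_augElt_mul_of (inv_mem ha.1) (inv_mem hb.2),
    mk_augElt_mul_augElt_mul_of (inv_mem hb.1) (inv_mem ha.2)]

lemma augElt_mul_augElt_pcomm_mem {x y z : F} (hx : x ∈ R) (hy : y ∈ S) (hz : z ∈ S) :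
    augElt x * augElt (pcomm y z) ∈ 𝔐 := by
  rw [augElt_pcomm, ← mul_assoc, mul_sub, sub_mul, ← mul_assoc, ← mul_assoc]
  exact sub_mem (augElt_mul_mul_mul_of_mem hx (inv_mem hy) _ _)
    (augElt_mul_mul_mul_of_mem hx (inv_mem hz) _ _)

lemma augElt_pcomm_mem_mul_top {a b : F} (ha : a ∈ R ⊓ S) (hb : b ∈ R ⊓ S) :
    augElt (pcomm a b) ∈ aug R * aug S * ⊤ := by
  rw [augElt_pcomm]
  refine Submodule.mul_mem_mul (sub_mem ?_ ?_) trivial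
  · exact Submodule.mul_mem_mul (augElt_mem_aug (inv_mem ha.1)) (augElt_mem_aug (inv_mem hb.2))
  · exact Submodule.mul_mem_mul (augElt_mem_aug (inv_mem hb.1)) (augElt_mem_aug (inv_mem ha.2))

lemma mul_augElt_mem {u : MonoidAlgebra ℤ F} (hu : u ∈ aug R * aug S * ⊤) (x : F) :
    u * augElt x ∈ 𝔐 := by
  refine Submodule.mul_induction_on hu (fun v hv w _ => ?_) (fun u₁ u₂ h₁ h₂ => ?_)
  · rw [mul_assoc v]; exact Submodule.mul_mem_mul hv (mul_augElt_mem_aug_top w x)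
  · rw [add_mul]; exact add_mem h₁ h₂

lemma mk_augElt_list_prod (l : List F) (hl : ∀ c ∈ l, augElt c ∈ aug R * aug S * ⊤) :
    (Submodule.Quotient.mk (augElt l.prod) : _ ⧸ 𝔐)
      = (l.map fun c => Submodule.Quotient.mk (augElt c)).sum := by
  induction l with
  | nil => rw [List.prod_nil, augElt_one]; rfl
  | cons c l ih =>
    have hc := hl c List.mem_cons_self
    rw [List.prod_cons, augElt_mul, mk_add, mk_add,
      (mk_eq_zero _).2 (mul_augElt_mem hc _), add_zero,
      ih fun c' hc' => hl c' (List.mem_cons_of_mem c hc'), List.map_cons, List.sum_cons]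

lemma augPair_list_prod (l : List F) (hl : ∀ x ∈ l, x ∈ R ⊓ S) (z : F) :
    augPair R S l.prod z = (l.map (augPair R S · z)).sum := by
  induction l with
  | nil => rw [List.prod_nil, augPair, augElt_one, zero_mul]; rfl
  | cons x l ih =>
    have hx := hl x List.mem_cons_self
    have hl' : ∀ y ∈ l, y ∈ R ⊓ S := fun y hy => hl y (List.mem_cons_of_mem x hy)
    rw [List.prod_cons, augPair_mul_left hx.1 (list_prod_mem hl').2, ih hl',
      List.map_cons, List.sum_cons]

lemma sum_augPair_eq_zero {k : ℕ} (x : Fin k → F) (hx : ∀ i, x i ∈ R ⊓ S)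
    (hprod : (List.ofFn x).prod = 1) (z : F) : ∑ i, augPair R S (x i) z = 0 := by
  rw [← List.sum_ofFn, ← Function.comp_def (augPair R S · z), ← List.map_ofFn,
    ← augPair_list_prod _ (List.forall_mem_ofFn_iff.2 hx), hprod, augPair, augElt_one, zero_mul]
  rfl

variable [R.Normal] [S.Normal]

lemma augPair_pcomm_right {β r d : F} (hβ : β ∈ R ⊓ S) (hr : r ∈ R) (hd : d ∈ S) :
    augPair R S β (pcomm d r⁻¹) = augPair R S (r⁻¹ * β * r) d - augPair R S β d := by
  have hu : r⁻¹ * β * r ∈ R ⊓ S := Subgroup.Normal.conj_mem' inferInstance β hβ r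
  have expand : augElt β * augElt (pcomm d r⁻¹)
      = augElt β * augElt d⁻¹ * augElt r * of ℤ F (d * r⁻¹)
        - (augElt (r⁻¹ * β * r) * augElt d⁻¹ * of ℤ F (d * r⁻¹)
          - augElt β * augElt d⁻¹ * of ℤ F (d * r⁻¹)
          + augElt r * augElt (r⁻¹ * β * r) * augElt d⁻¹ * of ℤ F (d * r⁻¹)) := by
    rw [augElt_pcomm d, inv_inv]
    linear_combination (norm := noncomm_ring)
      -(augElt_mul_augElt_eq_conj β r * augElt d⁻¹ * of ℤ F (d * r⁻¹))
  rw [augPair, expand, mk_sub, mk_add, mk_sub,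
    (mk_eq_zero _).2 (augElt_mul_mul_mul_of_mem hβ.1 (inv_mem hd) _ _),
    (mk_eq_zero _).2 (augElt_mul_mul_mul_of_mem hr hu.2 _ _),
    mk_augElt_mul_augElt_mul_of hu.1 (inv_mem hd), mk_augElt_mul_augElt_mul_of hβ.1 (inv_mem hd),
    augPair_inv_right hu.1 hd, augPair_inv_right hβ.1 hd]
  abel

lemma mk_augElt_pcomm_pcomm {r t d e : F} (hr : r ∈ R) (ht : t ∈ R ⊓ S) (hd : d ∈ S)
    (he : e ∈ S) :
    (Submodule.Quotient.mk (augElt (pcomm (pcomm r⁻¹ d) (pcomm t e))) : _ ⧸ 𝔐)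
      = augPair R S (pcomm e t) d - augPair R S (r⁻¹ * pcomm e t * r) d := by
  have ha : pcomm r⁻¹ d ∈ R ⊓ S := ⟨pcomm_mem_left (inv_mem hr) d, pcomm_mem_right _ hd⟩
  have hb : pcomm t e ∈ R ⊓ S := ⟨pcomm_mem_left ht.1 e, pcomm_mem_right _ he⟩
  rw [mk_augElt_pcomm ha hb, pcomm_inv, pcomm_inv]
  have h : augPair R S (pcomm d r⁻¹) (pcomm e t) = 0 :=
    (mk_eq_zero _).2 (augElt_mul_augElt_pcomm_mem (pcomm_mem_right d (inv_mem hr)) he ht.2)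
  rw [h, augPair_pcomm_right ⟨pcomm_mem_right e ht.1, pcomm_mem_left he t⟩ hr hd]
  abel

lemma augPair_pcomm_sub_conj {r t e : F} (hr : r ∈ R) (ht : t ∈ R ⊓ S) (he : e ∈ S)
    (z : F) :
    augPair R S (pcomm e t) z - augPair R S (r⁻¹ * pcomm e t * r) z
      = augPair R S (pcomm r t) z - augPair R S (e⁻¹ * pcomm r t * e) z := by
  have hconj : ∀ g : F, g⁻¹ * t * g ∈ R ⊓ S :=
    fun g => Subgroup.Normal.conj_mem' inferInstance t ht g
  have hq : pcomm e r ∈ R ⊓ S := ⟨pcomm_mem_right e hr, pcomm_mem_left he r⟩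
  have hswap : augPair R S ((r * e)⁻¹ * t * (r * e)) z
      = augPair R S ((e * r)⁻¹ * t * (e * r)) z := by
    rw [show (r * e)⁻¹ * t * (r * e)
        = pcomm e r * ((e * r)⁻¹ * t * (e * r)) * (pcomm e r)⁻¹ by simp only [pcomm]; group,
      augPair_conj hq (hconj _)]
  rw [show r⁻¹ * pcomm e t * r = ((e * r)⁻¹ * t * (e * r))⁻¹ * (r⁻¹ * t * r) by
      simp only [pcomm]; group,
    show e⁻¹ * pcomm r t * e = ((r * e)⁻¹ * t * (r * e))⁻¹ * (e⁻¹ * t * e) by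
      simp only [pcomm]; group,
    show pcomm e t = (e⁻¹ * t * e)⁻¹ * t by simp only [pcomm]; group,
    show pcomm r t = (r⁻¹ * t * r)⁻¹ * t by simp only [pcomm]; group,
    augPair_inv_mul (hconj _) ht.2, augPair_inv_mul (hconj _) (hconj _).2,
    augPair_inv_mul (hconj _) ht.2, augPair_inv_mul (hconj _) (hconj _).2, hswap]
  abel

end Quotient

theorem prop_w_general (F : Type) [Group F]
    (R S : Subgroup F) [R.Normal] [S.Normal]
    (k : ℕ) (r t : Fin k → F)
    (hr : ∀ i, r i ∈ R) (ht : ∀ i, t i ∈ R ⊓ S)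
    (hprod : (List.ofFn fun i => pcomm (r i) (t i)).prod = 1)
    (d e : F) (hd : d ∈ S) (he : e ∈ S) :
    (MonoidAlgebra.of ℤ F ((List.ofFn fun i => pcomm (pcomm (r i)⁻¹ d) (pcomm (t i) e)).prod))
      - 1 ∈ aug R * aug S * aug (⊤ : Subgroup F) := by
  have hγ : ∀ i, pcomm (r i) (t i) ∈ R ⊓ S := fun i => pcomm_mem_right _ (ht i)
  have hγe : ∀ i, e⁻¹ * pcomm (r i) (t i) * e ∈ R ⊓ S :=
    fun i => Subgroup.Normal.conj_mem' inferInstance _ (hγ i) e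
  have hprod_conj : (List.ofFn fun i => e⁻¹ * pcomm (r i) (t i) * e).prod = 1 := by
    simpa [List.map_ofFn, Function.comp_def, hprod] using
      (map_list_prod (MulAut.conj e⁻¹) (List.ofFn fun i => pcomm (r i) (t i))).symm
  have hc : ∀ c ∈ List.ofFn fun i => pcomm (pcomm (r i)⁻¹ d) (pcomm (t i) e),
      augElt c ∈ aug R * aug S * ⊤ :=
    List.forall_mem_ofFn_iff.2 fun i => augElt_pcomm_mem_mul_top
      ⟨pcomm_mem_left (inv_mem (hr i)) d, pcomm_mem_right _ hd⟩
      ⟨pcomm_mem_left (ht i).1 e, pcomm_mem_right _ he⟩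
  rw [← Submodule.Quotient.mk_eq_zero]
  change Submodule.Quotient.mk (augElt _) = _
  rw [mk_augElt_list_prod _ hc, List.map_ofFn, List.sum_ofFn]
  simp only [Function.comp_apply, mk_augElt_pcomm_pcomm (hr _) (ht _) hd he,
    augPair_pcomm_sub_conj (hr _) (ht _) he, Finset.sum_sub_distrib,
    sum_augPair_eq_zero _ hγ hprod, sum_augPair_eq_zero _ hγe hprod_conj, sub_zero]

/-- Proposition in Section 4: if `rᵢ ∈ R`, `tᵢ ∈ R ∩ S` satisfy
`∏ᵢ [rᵢ,tᵢ] = 1`, then for any `d, e ∈ S` the element `w = ∏ᵢ [[rᵢ⁻¹,d],[tᵢ,e]]`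
satisfies `w - 1 ∈ Δ(R)Δ(S)Δ(F)`. -/
theorem prop_w (F : Type) [Group F] [IsFreeGroup F]
    (R S : Subgroup F) [R.Normal] [S.Normal]
    (k : ℕ) (r t : Fin k → F)
    (hr : ∀ i, r i ∈ R) (ht : ∀ i, t i ∈ R ⊓ S)
    (hprod : (List.ofFn fun i => pcomm (r i) (t i)).prod = 1)
    (d e : F) (hd : d ∈ S) (he : e ∈ S) :
    (MonoidAlgebra.of ℤ F ((List.ofFn fun i => pcomm (pcomm (r i)⁻¹ d) (pcomm (t i) e)).prod))
      - 1 ∈ aug R * aug S * aug (⊤ : Subgroup F) :=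
  prop_w_general F R S k r t hr ht hprod d e hd he
end
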